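/- Let n be a natural number and let X, Y be n×n complex matrices. Then ‖|X| − |Y|‖₂ ≤ √2 · ‖X − Y‖₂. -/

import Mathlib

open Matrix
open scoped ComplexOrder

/-- Hilbert–Schmidt (Frobenius) norm: ‖X‖₂ = √(Re Tr(XᴴX)). -/
noncomputable def hsNorm {n : ℕ} (X : Matrix (Fin n) (Fin n) ℂ) : ℝ :=
  Real.sqrt ((Matrix.trace (Xᴴ * X)).re)

/-- Angle Θ(X,Y) = arccos(Re Tr(YᴴX) / (‖X‖₂‖Y‖₂)). -/
noncomputable def theta {n : ℕ} (X Y : Matrix (Fin n) (Fin n) ℂ) : ℝ :=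
  Real.arccos ((Matrix.trace (Yᴴ * X)).re / (hsNorm X * hsNorm Y))

/-- |X| : the positive semidefinite square root of XᴴX. -/
noncomputable def matAbs {n : ℕ} (X : Matrix (Fin n) (Fin n) ℂ) : Matrix (Fin n) (Fin n) ℂ :=
  (Matrix.posSemidef_conjTranspose_mul_self X).1.eigenvectorUnitary.1 *
    diagonal ((↑) ∘ Real.sqrt ∘ (Matrix.posSemidef_conjTranspose_mul_self X).1.eigenvalues) *
    (star (Matrix.posSemidef_conjTranspose_mul_self X).1.eigenvectorUnitary : Matrix (Fin n) (Fin n) ℂ)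

/-!
For Hermitian `A`, `B` we have `|A|² = A²`, so `‖|A| - |B|‖₂ ≤ ‖A - B‖₂` amounts to
`re tr (A B) ≤ re tr (|A| |B|)`. For arbitrary `X`, `Y` apply this to the Hermitian dilations
`[[0, Xᴴ], [X, 0]]`, whose absolute value is `diag (|X|, |Xᴴ|)`; this gives
`‖|X| - |Y|‖₂² + ‖|Xᴴ| - |Yᴴ|‖₂² ≤ 2 ‖X - Y‖₂²`.
-/

open scoped MatrixOrder

namespace Matrix

section Blocks

variable {l m n o α : Type*}

lemma fromBlocks_sub [Sub α] (A A' : Matrix n l α) (B B' : Matrix n m α) (C C' : Matrix o l α)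
    (D D' : Matrix o m α) :
    fromBlocks A B C D - fromBlocks A' B' C' D' =
      fromBlocks (A - A') (B - B') (C - C') (D - D') := by
  ext (_ | _) (_ | _) <;> rfl

lemma trace_fromBlocks [Fintype m] [Fintype n] [AddCommMonoid α] (A : Matrix m m α)
    (B : Matrix m n α) (C : Matrix n m α) (D : Matrix n n α) :
    trace (fromBlocks A B C D) = trace A + trace D := by
  simp [trace, Fintype.sum_sum_type]

def hermitianDilation [Zero α] [Star α] (X : Matrix m m α) : Matrix (m ⊕ m) (m ⊕ m) α :=
  fromBlocks 0 Xᴴ X 0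

lemma isHermitian_hermitianDilation [AddMonoid α] [StarAddMonoid α] (X : Matrix m m α) :
    (hermitianDilation X).IsHermitian := by
  simp [hermitianDilation, IsHermitian, fromBlocks_conjTranspose]

lemma hermitianDilation_sub [AddGroup α] [StarAddMonoid α] (X Y : Matrix m m α) :
    hermitianDilation (X - Y) = hermitianDilation X - hermitianDilation Y := by
  simp [hermitianDilation, fromBlocks_sub]

end Blocks

variable {l m n o 𝕜 : Type*} [Fintype l] [Fintype m] [Fintype n] [Fintype o] [RCLike 𝕜]

def hsNormSq (X : Matrix m n 𝕜) : ℝ := RCLike.re (trace (Xᴴ * X))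

lemma hsNormSq_nonneg (X : Matrix m n 𝕜) : 0 ≤ hsNormSq X :=
  (RCLike.nonneg_iff.mp (posSemidef_conjTranspose_mul_self X).trace_nonneg).1

lemma hsNormSq_conjTranspose (X : Matrix m n 𝕜) : hsNormSq Xᴴ = hsNormSq X := by
  rw [hsNormSq, hsNormSq, conjTranspose_conjTranspose, trace_mul_comm]

lemma hsNormSq_sub (X Y : Matrix m n 𝕜) :
    hsNormSq (X - Y) = hsNormSq X + hsNormSq Y - 2 * RCLike.re (trace (Yᴴ * X)) := by
  have hconj : RCLike.re (trace (Xᴴ * Y)) = RCLike.re (trace (Yᴴ * X)) := by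
    rw [← conjTranspose_conjTranspose Y, ← conjTranspose_mul, trace_conjTranspose,
      conjTranspose_conjTranspose, RCLike.star_def, RCLike.conj_re]
  simp only [hsNormSq, conjTranspose_sub, Matrix.sub_mul, Matrix.mul_sub, trace_sub, map_sub,
    hconj]
  ring

lemma hsNormSq_fromBlocks (A : Matrix n l 𝕜) (B : Matrix n m 𝕜) (C : Matrix o l 𝕜)
    (D : Matrix o m 𝕜) :
    hsNormSq (fromBlocks A B C D) = hsNormSq A + hsNormSq B + hsNormSq C + hsNormSq D := by
  simp only [hsNormSq, fromBlocks_conjTranspose, fromBlocks_multiply, trace_fromBlocks,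
    trace_add, map_add]
  ring

variable [DecidableEq m]

lemma re_trace_mul_nonneg {P Q : Matrix m m 𝕜} (hP : 0 ≤ P) (hQ : 0 ≤ Q) :
    0 ≤ RCLike.re (trace (P * Q)) := by
  obtain ⟨S, rfl⟩ := CStarAlgebra.nonneg_iff_eq_star_mul_self.mp hP
  rw [star_eq_conjTranspose, Matrix.mul_assoc, trace_mul_comm]
  exact (RCLike.nonneg_iff.mp
    ((nonneg_iff_posSemidef.mp hQ).mul_mul_conjTranspose_same S).trace_nonneg).1

/-- With `A = A⁺ - A⁻` and `|A| = A⁺ + A⁻`, the two sides differ by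
`2 re tr (A⁺ B⁻ + A⁻ B⁺) ≥ 0`. -/
lemma IsHermitian.re_trace_mul_le_re_trace_cfcAbs_mul_cfcAbs {A B : Matrix m m 𝕜}
    (hA : A.IsHermitian) (hB : B.IsHermitian) :
    RCLike.re (trace (A * B)) ≤ RCLike.re (trace (CFC.abs A * CFC.abs B)) := by
  have h₁ := re_trace_mul_nonneg (CFC.posPart_nonneg A) (CFC.negPart_nonneg B)
  have h₂ := re_trace_mul_nonneg (CFC.negPart_nonneg A) (CFC.posPart_nonneg B)
  rw [← CFC.posPart_add_negPart A hA, ← CFC.posPart_add_negPart B hB]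
  conv_lhs => rw [← CFC.posPart_sub_negPart A hA, ← CFC.posPart_sub_negPart B hB]
  simp only [add_mul, mul_add, sub_mul, mul_sub, trace_add, trace_sub, map_add, map_sub]
  linarith

lemma conjTranspose_cfcAbs (X : Matrix m m 𝕜) : (CFC.abs X)ᴴ = CFC.abs X :=
  (CFC.abs_nonneg X).isSelfAdjoint

lemma hsNormSq_cfcAbs (X : Matrix m m 𝕜) : hsNormSq (CFC.abs X) = hsNormSq X := by
  rw [hsNormSq, conjTranspose_cfcAbs, CFC.abs_mul_abs]
  rfl

lemma IsHermitian.hsNormSq_cfcAbs_sub_cfcAbs_le {A B : Matrix m m 𝕜} (hA : A.IsHermitian)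
    (hB : B.IsHermitian) : hsNormSq (CFC.abs A - CFC.abs B) ≤ hsNormSq (A - B) := by
  have key := hB.re_trace_mul_le_re_trace_cfcAbs_mul_cfcAbs hA
  rw [hsNormSq_sub, hsNormSq_sub, hsNormSq_cfcAbs, hsNormSq_cfcAbs, hB.eq, conjTranspose_cfcAbs]
  linarith

lemma fromBlocks_nonneg [DecidableEq n] {P : Matrix m m 𝕜} {Q : Matrix n n 𝕜} (hP : 0 ≤ P)
    (hQ : 0 ≤ Q) : 0 ≤ fromBlocks P 0 0 Q := by
  obtain ⟨S, rfl⟩ := CStarAlgebra.nonneg_iff_eq_star_mul_self.mp hP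
  obtain ⟨T, rfl⟩ := CStarAlgebra.nonneg_iff_eq_star_mul_self.mp hQ
  have hST : fromBlocks (star S * S) 0 0 (star T * T) =
      star (fromBlocks S 0 0 T) * fromBlocks S 0 0 T := by
    simp [star_eq_conjTranspose, fromBlocks_conjTranspose, fromBlocks_multiply]
  rw [hST]
  exact star_mul_self_nonneg _

lemma cfcAbs_hermitianDilation (X : Matrix m m 𝕜) :
    CFC.abs (hermitianDilation X) = fromBlocks (CFC.abs X) 0 0 (CFC.abs Xᴴ) := by
  rw [CFC.abs, CFC.sqrt_eq_iff _ _ (star_mul_self_nonneg _)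
    (fromBlocks_nonneg (CFC.abs_nonneg X) (CFC.abs_nonneg Xᴴ))]
  simp [hermitianDilation, fromBlocks_multiply, CFC.abs_mul_abs, star_eq_conjTranspose,
    fromBlocks_conjTranspose]

lemma hsNormSq_cfcAbs_sub_cfcAbs_add_hsNormSq_conjTranspose_le (X Y : Matrix m m 𝕜) :
    hsNormSq (CFC.abs X - CFC.abs Y) + hsNormSq (CFC.abs Xᴴ - CFC.abs Yᴴ) ≤
      2 * hsNormSq (X - Y) := by
  have h := (isHermitian_hermitianDilation X).hsNormSq_cfcAbs_sub_cfcAbs_le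
    (isHermitian_hermitianDilation Y)
  rw [cfcAbs_hermitianDilation, cfcAbs_hermitianDilation, fromBlocks_sub,
    ← hermitianDilation_sub, hermitianDilation, hsNormSq_fromBlocks, hsNormSq_fromBlocks,
    hsNormSq_conjTranspose] at h
  simpa [hsNormSq, two_mul] using h

end Matrix

lemma matAbs_eq_cfcAbs {n : ℕ} (X : Matrix (Fin n) (Fin n) ℂ) : matAbs X = CFC.abs X := by
  have hXX := posSemidef_conjTranspose_mul_self X
  rw [CFC.abs, star_eq_conjTranspose, CFC.sqrt_eq_real_sqrt _ hXX.nonneg,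
    cfcₙ_eq_cfc (hf0 := Real.sqrt_zero), hXX.1.cfc_eq]
  rfl

theorem stmt_14 {n : ℕ} (X Y : Matrix (Fin n) (Fin n) ℂ) :
    hsNorm (matAbs X - matAbs Y) ≤ Real.sqrt 2 * hsNorm (X - Y) := by
  have key := hsNormSq_cfcAbs_sub_cfcAbs_add_hsNormSq_conjTranspose_le X Y
  have h := hsNormSq_nonneg (CFC.abs Xᴴ - CFC.abs Yᴴ)
  simp only [hsNormSq, RCLike.re_to_complex] at key h
  rw [hsNorm, hsNorm, matAbs_eq_cfcAbs, matAbs_eq_cfcAbs, ← Real.sqrt_mul zero_le_two]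
  exact Real.sqrt_le_sqrt (by linarith)
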